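/- The logical-relation preservation for interval max: define on dual interval numbers max((x+εx'),(y+εy')) := (x+εx') if x > y (all of interval x strictly above interval y), (y+εy') if y > x, and [max(x⁻,y⁻), max(x⁺,y⁺)] + ε(x' ⊓ y') otherwise. Then for every rational r > 0, the ternary relation R^r (defined by R^r(I₁+εI₁', I₂+εI₂', I₃+εI₃') iff I₃ ⊑ I₁ ⊓ I₂ and r·I₃' has nonempty intersection with I₂−I₁) is preserved by max: R^r(x₁,x₂,x₃) and R^r(y₁,y₂,y₃) imply R^r(max(x₁,y₁), max(x₂,y₂), max(x₃,y₃)). -/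

import Mathlib

/-!
For proper primal parts, the primal part of `dmax x y` is always `[max(x⁻,y⁻), max(x⁺,y⁺)]`.
If `x₃` lies strictly above `y₃`, the enclosures `x₃ ⊑ x₁ ⊓ x₂` and `y₃ ⊑ y₁ ⊓ y₂` force
`x₁ > y₁` and `x₂ > y₂`, so all three maxima select the `x`'s and the claim is the hypothesis
on the `x`'s (symmetrically for `y`). Otherwise the tangent part of the third maximum is the
hull `x₃' ⊓ y₃'`, and whichever argument realises `max(x₁⁻, y₁⁻)` (resp. `max(x₂⁻, y₂⁻)`)
supplies the bound for the lower (resp. upper) tangent endpoint.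
-/

/-- A dual interval number represented by endpoints: `((l, u), (l', u'))` stands for
`[l,u] + ε[l',u']`. -/
abbrev DualI := (ℝ × ℝ) × (ℝ × ℝ)

/-- Properness: both components are genuine (nonempty compact) intervals. -/
def IsProper (x : DualI) : Prop := x.1.1 ≤ x.1.2 ∧ x.2.1 ≤ x.2.2

/-- Interval max on dual interval numbers:
`max(x+εx', y+εy') = x+εx'` if the interval `x` is strictly above `y`, symmetrically if
`y` is strictly above `x`, and `[max(x⁻,y⁻), max(x⁺,y⁺)] + ε(x' ⊓ y')` otherwise, where
`x' ⊓ y'` is the convex hull of the union. -/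
noncomputable def dmax (x y : DualI) : DualI :=
  if y.1.2 < x.1.1 then x
  else if x.1.2 < y.1.1 then y
  else ((max x.1.1 y.1.1, max x.1.2 y.1.2), (min x.2.1 y.2.1, max x.2.2 y.2.2))

/-- The logical relation `R^r`: `R^r(I₁+εI₁', I₂+εI₂', I₃+εI₃')` iff `I₃ ⊑ I₁ ⊓ I₂`
(reverse inclusion: the convex hull of `I₁ ∪ I₂` is contained in `[l₃,u₃]`) and
`r·I₃'` has nonempty intersection with `I₂ − I₁ = [l₂−u₁, u₂−l₁]`. -/
def Rr (r : ℝ) (a b c : DualI) : Prop :=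
  c.1.1 ≤ min a.1.1 b.1.1 ∧ max a.1.2 b.1.2 ≤ c.1.2 ∧
    r * c.2.1 ≤ b.1.2 - a.1.1 ∧ b.1.1 - a.1.2 ≤ r * c.2.2

theorem min_sub_sub_le_max_sub_max {α : Type*} [AddCommGroup α] [LinearOrder α]
    [IsOrderedAddMonoid α] (a b c d : α) : min (a - c) (b - d) ≤ max a b - max c d := by
  rcases max_choice c d with h | h <;> rw [h]
  · exact (min_le_left _ _).trans (sub_le_sub_right (le_max_left a b) c)
  · exact (min_le_right _ _).trans (sub_le_sub_right (le_max_right a b) d)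

def StrictlyAbove (x y : DualI) : Prop := y.1.2 < x.1.1

def dmaxOverlap (x y : DualI) : DualI :=
  ((max x.1.1 y.1.1, max x.1.2 y.1.2), (min x.2.1 y.2.1, max x.2.2 y.2.2))

section

variable {x y : DualI}

theorem StrictlyAbove.not_strictlyAbove (hx : x.1.1 ≤ x.1.2) (hy : y.1.1 ≤ y.1.2)
    (h : StrictlyAbove x y) : ¬ StrictlyAbove y x := by
  unfold StrictlyAbove at *
  linarith

theorem dmax_of_strictlyAbove (h : StrictlyAbove x y) : dmax x y = x := if_pos h

theorem dmax_of_strictlyAbove_right (h : ¬ StrictlyAbove x y) (h' : StrictlyAbove y x) :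
    dmax x y = y :=
  (if_neg h).trans (if_pos h')

theorem dmax_of_not_strictlyAbove (h : ¬ StrictlyAbove x y) (h' : ¬ StrictlyAbove y x) :
    dmax x y = dmaxOverlap x y :=
  (if_neg h).trans (if_neg h')

theorem fst_dmax (hx : x.1.1 ≤ x.1.2) (hy : y.1.1 ≤ y.1.2) :
    (dmax x y).1 = (dmaxOverlap x y).1 := by
  by_cases hxy : StrictlyAbove x y
  · rw [dmax_of_strictlyAbove hxy, dmaxOverlap, max_eq_left (le_of_lt (lt_of_le_of_lt hy hxy)),
      max_eq_left ((le_of_lt hxy).trans hx)]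
  by_cases hyx : StrictlyAbove y x
  · rw [dmax_of_strictlyAbove_right hxy hyx, dmaxOverlap,
      max_eq_right (le_of_lt (lt_of_le_of_lt hx hyx)), max_eq_right ((le_of_lt hyx).trans hy)]
  · rw [dmax_of_not_strictlyAbove hxy hyx]

end

section

variable {r : ℝ} {a b c a' b' : DualI}

theorem rr_congr_fst (ha : a.1 = a'.1) (hb : b.1 = b'.1) : Rr r a b c ↔ Rr r a' b' c := by
  rw [Rr, Rr, ha, hb]

variable {x₁ x₂ x₃ y₁ y₂ y₃ : DualI}

theorem Rr.strictlyAbove (hx : Rr r x₁ x₂ x₃) (hy : Rr r y₁ y₂ y₃)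
    (h : StrictlyAbove x₃ y₃) : StrictlyAbove x₁ y₁ ∧ StrictlyAbove x₂ y₂ := by
  obtain ⟨hx₃, -, -, -⟩ := hx
  obtain ⟨-, hy₃, -, -⟩ := hy
  rw [le_min_iff] at hx₃
  rw [max_le_iff] at hy₃
  unfold StrictlyAbove at *
  constructor <;> linarith

theorem Rr.dmaxOverlap (hr : 0 ≤ r) (hx : Rr r x₁ x₂ x₃) (hy : Rr r y₁ y₂ y₃) :
    Rr r (dmaxOverlap x₁ y₁) (dmaxOverlap x₂ y₂) (dmaxOverlap x₃ y₃) := by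
  obtain ⟨hxl, hxu, hx', hx''⟩ := hx
  obtain ⟨hyl, hyu, hy', hy''⟩ := hy
  rw [le_min_iff] at hxl hyl
  rw [max_le_iff] at hxu hyu
  refine ⟨le_min (max_le_max hxl.1 hyl.1) (max_le_max hxl.2 hyl.2),
    max_le (max_le_max hxu.1 hyu.1) (max_le_max hxu.2 hyu.2), ?_, ?_⟩
  · calc r * min x₃.2.1 y₃.2.1 = min (r * x₃.2.1) (r * y₃.2.1) := mul_min_of_nonneg _ _ hr
      _ ≤ min (x₂.1.2 - x₁.1.1) (y₂.1.2 - y₁.1.1) := min_le_min hx' hy'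
      _ ≤ _ := min_sub_sub_le_max_sub_max _ _ _ _
  · calc _ ≤ max (x₂.1.1 - x₁.1.2) (y₂.1.1 - y₁.1.2) := max_sub_max_le_max _ _ _ _
      _ ≤ max (r * x₃.2.2) (r * y₃.2.2) := max_le_max hx'' hy''
      _ = r * max x₃.2.2 y₃.2.2 := (mul_max_of_nonneg _ _ hr).symm

end

theorem stmt16_general (r : ℚ) (hr : 0 < r) (x₁ x₂ x₃ y₁ y₂ y₃ : DualI)
    (hx₁ : IsProper x₁) (hx₂ : IsProper x₂)
    (hy₁ : IsProper y₁) (hy₂ : IsProper y₂)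
    (h1 : Rr (r : ℝ) x₁ x₂ x₃) (h2 : Rr (r : ℝ) y₁ y₂ y₃) :
    Rr (r : ℝ) (dmax x₁ y₁) (dmax x₂ y₂) (dmax x₃ y₃) := by
  by_cases h₃ : StrictlyAbove x₃ y₃
  · obtain ⟨h₁, h₂⟩ := h1.strictlyAbove h2 h₃
    rwa [dmax_of_strictlyAbove h₁, dmax_of_strictlyAbove h₂, dmax_of_strictlyAbove h₃]
  by_cases h₃' : StrictlyAbove y₃ x₃
  · obtain ⟨h₁, h₂⟩ := h2.strictlyAbove h1 h₃'
    rwa [dmax_of_strictlyAbove_right (h₁.not_strictlyAbove hy₁.1 hx₁.1) h₁,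
      dmax_of_strictlyAbove_right (h₂.not_strictlyAbove hy₂.1 hx₂.1) h₂,
      dmax_of_strictlyAbove_right h₃ h₃']
  rw [dmax_of_not_strictlyAbove h₃ h₃', rr_congr_fst (fst_dmax hx₁.1 hy₁.1) (fst_dmax hx₂.1 hy₂.1)]
  exact h1.dmaxOverlap (by exact_mod_cast hr.le) h2

/-- The relation `R^r` is preserved by the interval max operation on dual interval
numbers, for every rational `r > 0`. -/
theorem stmt16 (r : ℚ) (hr : 0 < r) (x₁ x₂ x₃ y₁ y₂ y₃ : DualI)
    (hx₁ : IsProper x₁) (hx₂ : IsProper x₂) (hx₃ : IsProper x₃)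
    (hy₁ : IsProper y₁) (hy₂ : IsProper y₂) (hy₃ : IsProper y₃)
    (h1 : Rr (r : ℝ) x₁ x₂ x₃) (h2 : Rr (r : ℝ) y₁ y₂ y₃) :
    Rr (r : ℝ) (dmax x₁ y₁) (dmax x₂ y₂) (dmax x₃ y₃) :=
  stmt16_general r hr x₁ x₂ x₃ y₁ y₂ y₃ hx₁ hx₂ hy₁ hy₂ h1 h2
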